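/- Under the stated setting, suppose conditions (i)–(iii) of the approximation theorem hold at a point x₀ ∈ argmin φ. If ε^ν ∈ [0,∞) → ε ∈ [0,∞), then LimOut(ε^ν-argmin f^ν) ⊆ ε-argmin f; that is, every point (u,x) that is the limit of a subsequence of points (u^ν,x^ν) with (u^ν,x^ν) ∈ ε^ν-argmin f^ν satisfies u = 0 and x ∈ ε-argmin φ. -/

import Mathlib

open MeasureTheory Filter Topology Metric Set Pointwise

noncomputable section

/-- Euclidean (ℓ²) norm on `Fin m → ℝ`. -/
def en2 {m : ℕ} (u : Fin m → ℝ) : ℝ := Real.sqrt (∑ i, u i ^ 2)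

/-- Componentwise expectation of a vector-valued integrand. -/
def EV {d n m : ℕ} (μ : Measure (EuclideanSpace ℝ (Fin d)))
    (G : EuclideanSpace ℝ (Fin d) → EuclideanSpace ℝ (Fin n) → Fin m → ℝ)
    (x : EuclideanSpace ℝ (Fin n)) : Fin m → ℝ :=
  fun i => ∫ ξ, G ξ x i ∂μ

/-- The actual objective `φ`. -/
def phiFun {d n m : ℕ} (g0 : EuclideanSpace ℝ (Fin n) → EReal)
    (h : (Fin m → ℝ) → EReal) (μ : Measure (EuclideanSpace ℝ (Fin d)))
    (G : EuclideanSpace ℝ (Fin d) → EuclideanSpace ℝ (Fin n) → Fin m → ℝ) :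
    EuclideanSpace ℝ (Fin n) → EReal :=
  fun x => g0 x + h (EV μ G x)

/-- The Rockafellian `f`. -/
def rock {d n m : ℕ} (g0 : EuclideanSpace ℝ (Fin n) → EReal)
    (h : (Fin m → ℝ) → EReal) (μ : Measure (EuclideanSpace ℝ (Fin d)))
    (G : EuclideanSpace ℝ (Fin d) → EuclideanSpace ℝ (Fin n) → Fin m → ℝ) :
    (Fin m → ℝ) × EuclideanSpace ℝ (Fin n) → EReal :=
  fun p => g0 p.2 + h (p.1 + EV μ G p.2) + (if p.1 = 0 then (0 : EReal) else ⊤)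

/-- The approximating Rockafellian with distribution `μ'`, mapping `G'`, parameters `α`, `lam`. -/
def rockApprox {d n m : ℕ} (g0 : EuclideanSpace ℝ (Fin n) → EReal)
    (h : (Fin m → ℝ) → EReal) (μ' : Measure (EuclideanSpace ℝ (Fin d)))
    (G' : EuclideanSpace ℝ (Fin d) → EuclideanSpace ℝ (Fin n) → Fin m → ℝ)
    (α lam : ℝ) : (Fin m → ℝ) × EuclideanSpace ℝ (Fin n) → EReal :=
  fun p => g0 p.2 + h (p.1 + EV μ' G' p.2) + (((1 / (α * lam)) * en2 p.1 ^ α : ℝ) : EReal)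

/-- ε-argmin of an extended-real-valued function. -/
def eArgmin {γ : Type*} (ψ : γ → EReal) (ε : ℝ) : Set γ :=
  {z | ψ z ≠ ⊤ ∧ ψ z ≤ (⨅ w, ψ w) + (ε : EReal)}

/-- Outer limit of a sequence of sets: limits of subsequences of points from the sets. -/
def LimOut {γ : Type*} [TopologicalSpace γ] (C : ℕ → Set γ) : Set γ :=
  {z | ∃ N : ℕ → ℕ, StrictMono N ∧ ∃ zs : ℕ → γ, (∀ k, zs k ∈ C (N k)) ∧
    Tendsto zs atTop (𝓝 z)}



section AuxLemmas

lemma aux_en2_nonneg {m : ℕ} (u : Fin m → ℝ) : 0 ≤ en2 u := Real.sqrt_nonneg _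

lemma aux_abs_le_en2 {m : ℕ} (u : Fin m → ℝ) (i : Fin m) : |u i| ≤ en2 u := by
  rw [← Real.sqrt_sq_eq_abs]
  exact Real.sqrt_le_sqrt (Finset.single_le_sum (fun j _ => sq_nonneg (u j)) (Finset.mem_univ i))

lemma aux_en2_continuous {m : ℕ} : Continuous (en2 : (Fin m → ℝ) → ℝ) :=
  Real.continuous_sqrt.comp (continuous_finset_sum _ fun i _ => (continuous_apply i).pow 2)

lemma aux_en2_zero {m : ℕ} : en2 (0 : Fin m → ℝ) = 0 := by simp [en2]

lemma aux_en2_pos {m : ℕ} {u : Fin m → ℝ} (hu : u ≠ 0) : 0 < en2 u := by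
  apply Real.sqrt_pos.2
  have hex : ∃ i, u i ≠ 0 := by
    by_contra h'
    push_neg at h'
    exact hu (funext h')
  obtain ⟨i, hi⟩ := hex
  exact Finset.sum_pos' (fun j _ => sq_nonneg _) ⟨i, Finset.mem_univ i, sq_pos_of_ne_zero hi⟩

lemma aux_en2_smul {m : ℕ} (c : ℝ) (u : Fin m → ℝ) :
    en2 (fun i => c * u i) = |c| * en2 u := by
  unfold en2
  rw [← Real.sqrt_sq_eq_abs, ← Real.sqrt_mul (sq_nonneg c), Finset.mul_sum]
  congr 1
  exact Finset.sum_congr rfl fun j _ => by ring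

lemma aux_tendsto_min {v : ℕ → ℝ} {c : ℝ} (hv : ∀ δ > (0 : ℝ), ∀ᶠ k in atTop, c - δ < v k) :
    Tendsto (fun k => min (v k) c) atTop (𝓝 c) := by
  rw [tendsto_order]
  constructor
  · intro b hb
    filter_upwards [hv (c - b) (by linarith)] with k hk
    exact lt_min (by linarith) hb
  · intro b hb
    exact Eventually.of_forall fun k => lt_of_le_of_lt (min_le_right _ _) hb

lemma aux_exists_coe_lt {a : EReal} (ha : a ≠ ⊥) : ∃ c : ℝ, (c : EReal) < a := by
  obtain ⟨c, _, hc⟩ := EReal.exists_between_coe_real (Ne.bot_lt ha)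
  exact ⟨c, hc⟩

lemma aux_split {a b : EReal} (ha : a ≠ ⊥) (hb : b ≠ ⊥) {r : ℝ} (hr : (r : EReal) < a + b) :
    ∃ c₁ c₂ : ℝ, (c₁ : EReal) < a ∧ (c₂ : EReal) < b ∧ r < c₁ + c₂ := by
  by_cases hatop : a = ⊤
  · obtain ⟨c₂, hc₂⟩ := aux_exists_coe_lt hb
    refine ⟨r - c₂ + 1, c₂, ?_, hc₂, by linarith⟩
    rw [hatop]; exact EReal.coe_lt_top _
  · have haR : a = ((a.toReal : ℝ) : EReal) := (EReal.coe_toReal hatop ha).symm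
    set a' := a.toReal with ha'
    have hb' : ((r - a' : ℝ) : EReal) < b := by
      by_contra hle
      push_neg at hle
      have hcontra : a + b ≤ (r : EReal) := by
        calc a + b ≤ a + ((r - a' : ℝ) : EReal) := add_le_add_right hle a
          _ = ((a' + (r - a') : ℝ) : EReal) := by rw [haR, ← EReal.coe_add]
          _ = (r : EReal) := by norm_num
      exact absurd hr (not_lt.2 hcontra)
    obtain ⟨c₂, hc₂l, hc₂r⟩ := EReal.exists_between_coe_real hb'
    have hc₂l' : r - a' < c₂ := EReal.coe_lt_coe_iff.1 hc₂l
    obtain ⟨c₁, hc₁l, hc₁r⟩ := exists_between (show r - c₂ < a' by linarith)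
    refine ⟨c₁, c₂, ?_, hc₂r, by linarith⟩
    rw [haR]
    exact_mod_cast hc₁r

lemma aux_integrable {d : ℕ} {Ξ : Set (EuclideanSpace ℝ (Fin d))}
    {μ' : Measure (EuclideanSpace ℝ (Fin d))} [IsFiniteMeasure μ'] (hΞ : μ' Ξᶜ = 0)
    {f : EuclideanSpace ℝ (Fin d) → ℝ} (hf : Measurable f) {M : ℝ}
    (hM : ∀ ξ ∈ Ξ, |f ξ| ≤ M) : Integrable f μ' := by
  refine ⟨hf.aestronglyMeasurable, HasFiniteIntegral.of_bounded (C := M) ?_⟩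
  have hae : ∀ᵐ ξ ∂μ', ξ ∈ Ξ := by
    rw [ae_iff]
    exact hΞ
  exact hae.mono fun ξ hξ => by simpa [Real.norm_eq_abs] using hM ξ hξ

end AuxLemmas

/-- Theorem 2.2(c): outer limits of near-minimizers of the approximating Rockafellians
lie in the near-minimizers of f (equivalently, u = 0 and x nearly minimizes φ). -/
theorem limout_eargmin_subset

    {d n m : ℕ}
    (Ξ : Set (EuclideanSpace ℝ (Fin d))) (hΞne : Ξ.Nonempty) (hΞcl : IsClosed Ξ)
    (μ : Measure (EuclideanSpace ℝ (Fin d))) [IsProbabilityMeasure μ] (hμΞ : μ Ξᶜ = 0)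
    (μs : ℕ → Measure (EuclideanSpace ℝ (Fin d))) [∀ ν, IsProbabilityMeasure (μs ν)]
    (hμsΞ : ∀ ν, μs ν Ξᶜ = 0)
    (g0 : EuclideanSpace ℝ (Fin n) → EReal)
    (hg0lsc : LowerSemicontinuous g0)
    (hg0bot : ∀ x, g0 x ≠ ⊥) (hg0top : ∃ x, g0 x ≠ ⊤)
    (h : (Fin m → ℝ) → EReal)
    (hhlsc : LowerSemicontinuous h)
    (hhbot : ∀ u, h u ≠ ⊥) (hhtop : ∃ u, h u ≠ ⊤)
    (hhmono : ∀ u v : Fin m → ℝ, (∀ i, u i ≤ v i) → h u ≤ h v)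
    (G : EuclideanSpace ℝ (Fin d) → EuclideanSpace ℝ (Fin n) → Fin m → ℝ)
    (Gs : ℕ → EuclideanSpace ℝ (Fin d) → EuclideanSpace ℝ (Fin n) → Fin m → ℝ)
    (hGmeas : ∀ i, Measurable fun p : EuclideanSpace ℝ (Fin d) × EuclideanSpace ℝ (Fin n) =>
      G p.1 p.2 i)
    (hGlsc : ∀ ξ i, LowerSemicontinuous fun x => G ξ x i)
    (hGsmeas : ∀ ν i, Measurable fun p : EuclideanSpace ℝ (Fin d) × EuclideanSpace ℝ (Fin n) =>
      Gs ν p.1 p.2 i)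
    (hGslsc : ∀ ν ξ i, LowerSemicontinuous fun x => Gs ν ξ x i)
    (hbd : ∀ x, ∃ ε > 0, ∃ M : ℝ, ∀ ξ ∈ Ξ, ∀ y ∈ closedBall x ε,
        en2 (G ξ y) ≤ M ∧ ∀ ν, en2 (Gs ν ξ y) ≤ M)
    (α : ℝ) (hα : 1 ≤ α)
    (lam : ℕ → ℝ) (hlam : ∀ ν, 0 < lam ν)

    (x0 : EuclideanSpace ℝ (Fin n))
    (hx0dom : phiFun g0 h μ G x0 ≠ ⊤)
    (hx0min : phiFun g0 h μ G x0 = ⨅ x, phiFun g0 h μ G x)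

    (hyp_i : ∀ ν, ∀ᵐ ξ ∂μ, ∀ i, Gs ν ξ x0 i ≤ G ξ x0 i)
    (hyp_ii : ∀ (x : EuclideanSpace ℝ (Fin n)) (xs : ℕ → EuclideanSpace ℝ (Fin n)),
        Tendsto xs atTop (𝓝 x) → ∀ i,
        EV μ G x i ≤ liminf (fun ν => EV (μs ν) (Gs ν) (xs ν) i) atTop)
    (hyp_iii₁ : Tendsto lam atTop (𝓝 0))
    (hyp_iii₂ : Tendsto
        (fun ν => fun i => lam ν ^ (-(1 / α)) * (EV (μs ν) (Gs ν) x0 i - EV μ (Gs ν) x0 i))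
        atTop (𝓝 0))

    (εs : ℕ → ℝ) (hεs : ∀ ν, 0 ≤ εs ν) (ε : ℝ) (hε : 0 ≤ ε)
    (hεlim : Tendsto εs atTop (𝓝 ε)) :
    LimOut (fun ν => eArgmin (rockApprox g0 h (μs ν) (Gs ν) α (lam ν)) (εs ν)) ⊆
      {p : (Fin m → ℝ) × EuclideanSpace ℝ (Fin n) |
        p.1 = 0 ∧ p.2 ∈ eArgmin (phiFun g0 h μ G) ε} := by
  classical
  rintro ⟨u, x⟩ hp
  obtain ⟨N, hN, zs, hzs, hlim⟩ := hp
  have hNat : Tendsto N atTop atTop := hN.tendsto_atTop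
  have huk : Tendsto (fun k => (zs k).1) atTop (𝓝 u) :=
    (continuous_fst.tendsto (u, x)).comp hlim
  have hxk : Tendsto (fun k => (zs k).2) atTop (𝓝 x) :=
    (continuous_snd.tendsto (u, x)).comp hlim
  have hαpos : (0 : ℝ) < α := lt_of_lt_of_le one_pos hα
  have hα0 : α ≠ 0 := ne_of_gt hαpos
  -- the candidate shift
  set u0 : ℕ → Fin m → ℝ := fun ν i => EV μ (Gs ν) x0 i - EV (μs ν) (Gs ν) x0 i with hu0def
  set δf : ℕ → ℝ := fun ν => 1 / (α * lam ν) * en2 (u0 ν) ^ α with hδfdef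
  -- δf → 0
  have hδ0 : Tendsto δf atTop (𝓝 0) := by
    have hteq : ∀ ν, en2 (fun i => lam ν ^ (-(1 / α)) * (EV (μs ν) (Gs ν) x0 i - EV μ (Gs ν) x0 i))
        = lam ν ^ (-(1 / α)) * en2 (u0 ν) := by
      intro ν
      have h1 : (fun i => lam ν ^ (-(1 / α)) * (EV (μs ν) (Gs ν) x0 i - EV μ (Gs ν) x0 i))
          = fun i => (-(lam ν ^ (-(1 / α)))) * u0 ν i := by
        funext i
        simp only [hu0def]
        ring
      rw [h1, aux_en2_smul, abs_neg, abs_of_pos (Real.rpow_pos_of_pos (hlam ν) _)]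
    have ht : Tendsto (fun ν => lam ν ^ (-(1 / α)) * en2 (u0 ν)) atTop (𝓝 0) := by
      have h2 := (aux_en2_continuous.tendsto (0 : Fin m → ℝ)).comp hyp_iii₂
      rw [aux_en2_zero] at h2
      exact h2.congr hteq
    have htα : Tendsto (fun ν => (lam ν ^ (-(1 / α)) * en2 (u0 ν)) ^ α) atTop (𝓝 0) := by
      have hc : ContinuousAt (fun s : ℝ => s ^ α) 0 :=
        Real.continuousAt_rpow_const 0 α (Or.inr (le_of_lt hαpos))
      have h3 := hc.tendsto.comp ht
      rwa [Real.zero_rpow hα0] at h3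
    have heq : ∀ ν, δf ν = 1 / α * ((lam ν ^ (-(1 / α)) * en2 (u0 ν)) ^ α) := by
      intro ν
      have hl0 : lam ν ≠ 0 := (hlam ν).ne'
      rw [Real.mul_rpow (le_of_lt (Real.rpow_pos_of_pos (hlam ν) _)) (aux_en2_nonneg _),
        ← Real.rpow_mul (le_of_lt (hlam ν)),
        show -(1 / α) * α = -1 by rw [neg_mul, one_div_mul_cancel hα0],
        Real.rpow_neg_one]
      simp only [hδfdef]
      field_simp
      try ring
    have h4 := htα.const_mul (1 / α)
    rw [mul_zero] at h4
    exact h4.congr fun ν => (heq ν).symm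
  -- integrability and monotonicity at x0
  obtain ⟨ε₀, hε₀, M₀, hM₀⟩ := hbd x0
  have hx0mem : x0 ∈ closedBall x0 ε₀ := mem_closedBall_self (le_of_lt hε₀)
  have hint_cand : ∀ ν i, EV μ (Gs ν) x0 i ≤ EV μ G x0 i := by
    intro ν i
    have hmG : Measurable fun ξ => G ξ x0 i :=
      (hGmeas i).comp (measurable_id.prodMk measurable_const)
    have hmGs : Measurable fun ξ => Gs ν ξ x0 i :=
      (hGsmeas ν i).comp (measurable_id.prodMk measurable_const)
    have hiG : Integrable (fun ξ => G ξ x0 i) μ :=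
      aux_integrable hμΞ hmG fun ξ hξ =>
        le_trans (aux_abs_le_en2 _ i) (hM₀ ξ hξ x0 hx0mem).1
    have hiGs : Integrable (fun ξ => Gs ν ξ x0 i) μ :=
      aux_integrable hμΞ hmGs fun ξ hξ =>
        le_trans (aux_abs_le_en2 _ i) ((hM₀ ξ hξ x0 hx0mem).2 ν)
    exact integral_mono_ae hiGs hiG ((hyp_i ν).mono fun ξ hξ => hξ i)
  -- candidate bound on the infimum
  have hcand : ∀ ν, (⨅ w, rockApprox g0 h (μs ν) (Gs ν) α (lam ν) w)
      ≤ phiFun g0 h μ G x0 + ((δf ν : ℝ) : EReal) := by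
    intro ν
    refine le_trans (iInf_le _ (u0 ν, x0)) ?_
    simp only [rockApprox, phiFun]
    have h1 : u0 ν + EV (μs ν) (Gs ν) x0 = EV μ (Gs ν) x0 := by
      funext i
      simp only [hu0def, Pi.add_apply]
      ring
    rw [h1]
    exact add_le_add (add_le_add_right (hhmono _ _ (hint_cand ν)) _) le_rfl
  -- φ(x0) is finite
  have hφbot : phiFun g0 h μ G x0 ≠ ⊥ := by
    simp only [phiFun, ne_eq, EReal.add_eq_bot_iff, not_or]
    exact ⟨hg0bot x0, hhbot _⟩
  set r0 := (phiFun g0 h μ G x0).toReal with hr0def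
  have hr0 : (r0 : EReal) = phiFun g0 h μ G x0 := EReal.coe_toReal hx0dom hφbot
  -- penalty terms
  set pk : ℕ → ℝ := fun k => 1 / (α * lam (N k)) * en2 ((zs k).1) ^ α with hpkdef
  have hpknn : ∀ k, 0 ≤ pk k := by
    intro k
    have h1 : 0 < α * lam (N k) := mul_pos hαpos (hlam _)
    exact mul_nonneg (le_of_lt (div_pos one_pos h1)) (Real.rpow_nonneg (aux_en2_nonneg _) α)
  set vk : ℕ → Fin m → ℝ := fun k => (zs k).1 + EV (μs (N k)) (Gs (N k)) ((zs k).2) with hvkdef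
  -- the key estimate
  have key : ∀ k, g0 ((zs k).2) + h (vk k) + ((pk k : ℝ) : EReal)
      ≤ ((r0 + δf (N k) + εs (N k) : ℝ) : EReal) := by
    intro k
    have h1 : g0 ((zs k).2) + h (vk k) + ((pk k : ℝ) : EReal)
        = rockApprox g0 h (μs (N k)) (Gs (N k)) α (lam (N k)) (zs k) := rfl
    rw [h1]
    calc rockApprox g0 h (μs (N k)) (Gs (N k)) α (lam (N k)) (zs k)
        ≤ (⨅ w, rockApprox g0 h (μs (N k)) (Gs (N k)) α (lam (N k)) w)
          + ((εs (N k) : ℝ) : EReal) := (hzs k).2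
      _ ≤ (phiFun g0 h μ G x0 + ((δf (N k) : ℝ) : EReal)) + ((εs (N k) : ℝ) : EReal) :=
          add_le_add_left (hcand (N k)) _
      _ = ((r0 + δf (N k) + εs (N k) : ℝ) : EReal) := by
          rw [← hr0, ← EReal.coe_add, ← EReal.coe_add]
  have hR : Tendsto (fun k => r0 + δf (N k) + εs (N k)) atTop (𝓝 (r0 + ε)) := by
    have h1 : Tendsto (fun k => δf (N k)) atTop (𝓝 0) := hδ0.comp hNat
    have h2 : Tendsto (fun k => εs (N k)) atTop (𝓝 ε) := hεlim.comp hNat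
    have h3 := (h1.const_add r0).add h2
    rwa [add_zero] at h3
  -- the interleaved sequence xs
  set xs : ℕ → EuclideanSpace ℝ (Fin n) :=
    fun ν => if hν : ∃ k, N k = ν then (zs hν.choose).2 else x with hxsdef
  have hxsN : ∀ k, xs (N k) = (zs k).2 := by
    intro k
    have hex : ∃ j, N j = N k := ⟨k, rfl⟩
    simp only [hxsdef, dif_pos hex]
    rw [hN.injective hex.choose_spec]
  have hxs : Tendsto xs atTop (𝓝 x) := by
    rw [Filter.tendsto_def]
    intro s hs
    have h1 : ∀ᶠ k in atTop, (zs k).2 ∈ s := hxk.eventually (eventually_of_mem hs fun y hy => hy)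
    obtain ⟨K, hK⟩ := eventually_atTop.1 h1
    rw [mem_atTop_sets]
    refine ⟨N K, fun ν hν => ?_⟩
    simp only [Set.mem_preimage]
    by_cases hν' : ∃ k, N k = ν
    · have h2 : K ≤ hν'.choose := by
        apply hN.le_iff_le.1
        rw [hν'.choose_spec]
        exact hν
      simp only [hxsdef, dif_pos hν']
      exact hK _ h2
    · simp only [hxsdef, dif_neg hν']
      exact mem_of_mem_nhds hs
  -- boundedness of the approximate expectations near x
  obtain ⟨ε₁, hε₁, M₁, hM₁⟩ := hbd x
  have haeΞ : ∀ ν, ∀ᵐ ξ ∂(μs ν), ξ ∈ Ξ := fun ν => by rw [ae_iff]; exact hμsΞ ν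
  have hball : ∀ᶠ ν in atTop, xs ν ∈ closedBall x ε₁ :=
    hxs.eventually (eventually_of_mem (Metric.closedBall_mem_nhds x hε₁) fun y hy => hy)
  have habd : ∀ᶠ ν in atTop, ∀ i, |EV (μs ν) (Gs ν) (xs ν) i| ≤ M₁ := by
    filter_upwards [hball] with ν hν i
    have h1 : ∀ᵐ ξ ∂(μs ν), ‖Gs ν ξ (xs ν) i‖ ≤ M₁ := by
      filter_upwards [haeΞ ν] with ξ hξ
      rw [Real.norm_eq_abs]
      exact le_trans (aux_abs_le_en2 _ i) ((hM₁ ξ hξ (xs ν) hν).2 ν)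
    have h2 := norm_integral_le_of_norm_le_const h1
    rw [probReal_univ, mul_one] at h2
    simpa [EV, Real.norm_eq_abs] using h2
  have hlb : ∀ i, ∀ δ > (0 : ℝ), ∀ᶠ ν in atTop,
      EV μ G x i - δ < EV (μs ν) (Gs ν) (xs ν) i := by
    intro i δ hδ
    have h1 : EV μ G x i ≤ liminf (fun ν => EV (μs ν) (Gs ν) (xs ν) i) atTop :=
      hyp_ii x xs hxs i
    have hbdd : IsBoundedUnder (· ≥ ·) atTop (fun ν => EV (μs ν) (Gs ν) (xs ν) i) :=
      ⟨-M₁, eventually_map.2 (habd.mono fun ν hν => (abs_le.1 (hν i)).1)⟩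
    exact eventually_lt_of_lt_liminf (lt_of_lt_of_le (by linarith) h1) hbdd
  set w : Fin m → ℝ := u + EV μ G x with hwdef
  have hvklb : ∀ i, ∀ δ > (0 : ℝ), ∀ᶠ k in atTop, w i - δ < vk k i := by
    intro i δ hδ
    have h1 := hNat.eventually (hlb i (δ / 2) (by linarith))
    have h2 : ∀ᶠ k in atTop, u i - δ / 2 < (zs k).1 i := by
      have h3 : Tendsto (fun k => (zs k).1 i) atTop (𝓝 (u i)) :=
        ((continuous_apply i).tendsto u).comp huk
      exact h3.eventually (eventually_of_mem
        (Ioi_mem_nhds (show u i - δ / 2 < u i by linarith)) fun y hy => hy)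
    filter_upwards [h1, h2] with k hk1 hk2
    rw [hxsN k] at hk1
    show u i + EV μ G x i - δ < (zs k).1 i + EV (μs (N k)) (Gs (N k)) ((zs k).2) i
    linarith
  have hmin : Tendsto (fun k => fun i => min (vk k i) (w i)) atTop (𝓝 w) :=
    tendsto_pi_nhds.2 fun i => aux_tendsto_min (hvklb i)
  have hE2 : ∀ c₂ : ℝ, (c₂ : EReal) < h w → ∀ᶠ k in atTop, (c₂ : EReal) < h (vk k) := by
    intro c₂ hc₂
    filter_upwards [hmin.eventually (hhlsc w _ hc₂)] with k hk
    exact lt_of_lt_of_le hk (hhmono _ _ fun i => min_le_left _ _)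
  have hE1 : ∀ c₁ : ℝ, (c₁ : EReal) < g0 x → ∀ᶠ k in atTop, (c₁ : EReal) < g0 ((zs k).2) :=
    fun c₁ hc₁ => hxk.eventually (hg0lsc x _ hc₁)
  -- first conclusion: u = 0
  have hu0 : u = 0 := by
    by_contra hu
    obtain ⟨c₁, -, hc₁⟩ := EReal.exists_between_coe_real (Ne.bot_lt (hg0bot x))
    obtain ⟨c₂, -, hc₂⟩ := EReal.exists_between_coe_real (Ne.bot_lt (hhbot w))
    have hRlt : ∀ᶠ k in atTop, r0 + δf (N k) + εs (N k) < r0 + ε + 1 :=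
      hR.eventually (eventually_of_mem (Iio_mem_nhds (by linarith)) fun y hy => hy)
    have hpkC : ∀ᶠ k in atTop, pk k ≤ r0 + ε + 1 - c₁ - c₂ := by
      filter_upwards [hE1 c₁ hc₁, hE2 c₂ hc₂, hRlt] with k h1 h2 h3
      have h4 : ((c₁ + c₂ + pk k : ℝ) : EReal) ≤ ((r0 + δf (N k) + εs (N k) : ℝ) : EReal) := by
        calc ((c₁ + c₂ + pk k : ℝ) : EReal)
            = (c₁ : EReal) + (c₂ : EReal) + ((pk k : ℝ) : EReal) := by
              rw [EReal.coe_add, EReal.coe_add]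
          _ ≤ g0 ((zs k).2) + h (vk k) + ((pk k : ℝ) : EReal) :=
              add_le_add (add_le_add h1.le h2.le) le_rfl
          _ ≤ _ := key k
      have h5 := EReal.coe_le_coe_iff.1 h4
      linarith
    have hen : Tendsto (fun k => en2 ((zs k).1)) atTop (𝓝 (en2 u)) :=
      (aux_en2_continuous.tendsto u).comp huk
    have hepos : 0 < en2 u := aux_en2_pos hu
    have h4 : ∀ᶠ k in atTop, en2 u / 2 ≤ en2 ((zs k).1) := by
      filter_upwards [hen.eventually (eventually_of_mem (Ioi_mem_nhds (half_lt_self hepos))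
        fun y hy => hy)] with k hk
      exact le_of_lt hk
    set C' : ℝ := max (r0 + ε + 1 - c₁ - c₂) 0 + 1 with hC'def
    have hC'pos : 0 < C' := by
      have h5 := le_max_right (r0 + ε + 1 - c₁ - c₂) 0
      simp only [hC'def]
      linarith
    have hbα : 0 < (en2 u / 2) ^ α := Real.rpow_pos_of_pos (half_pos hepos) α
    have h5 : ∀ᶠ k in atTop, lam (N k) < (en2 u / 2) ^ α / (α * C') :=
      (hyp_iii₁.comp hNat).eventually (eventually_of_mem
        (Iio_mem_nhds (div_pos hbα (mul_pos hαpos hC'pos))) fun y hy => hy)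
    obtain ⟨k, hk1, hk2, hk3⟩ := (hpkC.and (h4.and h5)).exists
    have h6 : lam (N k) * (α * C') < (en2 u / 2) ^ α :=
      (lt_div_iff₀ (mul_pos hαpos hC'pos)).1 hk3
    have h7 : (en2 u / 2) ^ α ≤ en2 ((zs k).1) ^ α :=
      Real.rpow_le_rpow (le_of_lt (half_pos hepos)) hk2 (le_of_lt hαpos)
    have h8 : C' < pk k := by
      have h9 : C' * (α * lam (N k)) < en2 ((zs k).1) ^ α := by
        calc C' * (α * lam (N k)) = lam (N k) * (α * C') := by ring
          _ < (en2 u / 2) ^ α := h6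
          _ ≤ _ := h7
      have h10 : pk k = en2 ((zs k).1) ^ α / (α * lam (N k)) := by
        simp only [hpkdef]
        ring
      rw [h10]
      exact (lt_div_iff₀ (mul_pos hαpos (hlam (N k)))).2 h9
    have h11 : r0 + ε + 1 - c₁ - c₂ < C' := by
      have h12 := le_max_left (r0 + ε + 1 - c₁ - c₂) 0
      simp only [hC'def]
      linarith
    linarith
  -- second conclusion: x is an ε-minimizer of φ
  have hwx : w = EV μ G x := by
    rw [hwdef, hu0, zero_add]
  have hfin : phiFun g0 h μ G x ≤ ((r0 + ε : ℝ) : EReal) := by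
    by_contra hcon
    push_neg at hcon
    have hcon' : ((r0 + ε : ℝ) : EReal) < g0 x + h w := by
      rw [hwx]
      exact hcon
    obtain ⟨c₁, c₂, hc₁, hc₂, hsum⟩ := aux_split (hg0bot x) (hhbot w) hcon'
    have hev : ∀ᶠ k in atTop, c₁ + c₂ ≤ r0 + δf (N k) + εs (N k) := by
      filter_upwards [hE1 c₁ hc₁, hE2 c₂ hc₂] with k h1 h2
      have h3 : ((c₁ + c₂ : ℝ) : EReal) ≤ ((r0 + δf (N k) + εs (N k) : ℝ) : EReal) := by
        calc ((c₁ + c₂ : ℝ) : EReal) = (c₁ : EReal) + (c₂ : EReal) := EReal.coe_add _ _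
          _ ≤ g0 ((zs k).2) + h (vk k) := add_le_add h1.le h2.le
          _ ≤ g0 ((zs k).2) + h (vk k) + ((pk k : ℝ) : EReal) :=
              le_add_of_nonneg_right (by exact_mod_cast hpknn k)
          _ ≤ _ := key k
      exact EReal.coe_le_coe_iff.1 h3
    have h4 : c₁ + c₂ ≤ r0 + ε := ge_of_tendsto hR hev
    linarith
  refine ⟨hu0, ?_, ?_⟩
  · intro htop
    rw [htop] at hfin
    exact (EReal.coe_ne_top _) (top_le_iff.1 hfin)
  · rw [← hx0min, ← hr0, ← EReal.coe_add]
    exact hfin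

end
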